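/- arXiv:2303.06102 — 3 statements merged into one kernel-verified Lean document; each statement's English description precedes it below -/
import Mathlib

section
/- Thorup-Zwick stretch lemma: let V = A_0 ⊇ ... ⊇ A_k = ∅ with A_k−1 possibly nonempty, and for v ∈ V let p_i(v) ∈ A_i achieve dist_G(v, p_i(v)) = dist_G(v, A_i). For any u, w ∈ V, there exists an index i ≤ k−1 and a vertex z ∈ B(u) ∩ B(w) ∪ {p_i(u), p_i(w)} such that dist_G(u,z) + dist_G(w,z) ≤ (2k−1)·dist_G(u,w). In particular, defining hub sets S(v) = B(v) ∪ {p_0(v),...,p_{k−1}(v)} with exact distances as estimates yields a hub-labeling scheme of stretch 2k−1. -/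
open scoped ENNReal

/-!
Alternate between the two endpoints. Write `Δ = d(u, w)` and suppose `d(x, p_j(x)) ≤ j·Δ` for
one endpoint `x`, the other being `y`; this holds for `j = 0` since `p_0(x) = x`. If
`d(y, p_j(x)) < d(y, A_{j+1})`, then `p_j(x)` lies in the bunch of `y` and in the hub set of `x`,
and `d(x, p_j(x)) + d(y, p_j(x)) ≤ jΔ + (j+1)Δ ≤ (2k-1)Δ`. Otherwise
`d(y, p_{j+1}(y)) = d(y, A_{j+1}) ≤ d(y, p_j(x)) ≤ (j+1)Δ`, and the roles of `x` and `y` swap at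
level `j+1`. Since `A_k = ∅` forces `d(y, A_k) = ∞`, the first case must occur below level `k`
when `Δ < ∞`.
-/

/-- Distance from a vertex to a set: `dist_G(v, A) = min_{u ∈ A} dist_G(v, u)` (∞ if `A = ∅`). -/
noncomputable def distToSet {V : Type*} (d : V → V → ℝ≥0∞) (v : V) (A : Set V) : ℝ≥0∞ :=
  ⨅ u ∈ A, d v u

/-- The Thorup–Zwick bunch `B(x) = ⋃_{i<k} {y ∈ A_i \ A_{i+1} : d(x,y) < d(x, A_{i+1})}`. -/
def Bunch {V : Type*} (d : V → V → ℝ≥0∞) (k : ℕ) (A : ℕ → Set V) (x : V) : Set V :=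
  ⋃ i < k, {y ∈ A i \ A (i + 1) | d x y < distToSet d x (A (i + 1))}

section Pseudometric

variable {V : Type*} {d : V → V → ℝ≥0∞}

theorem dist_le_add_one_mul_of_dist_le (hsym : ∀ x y, d x y = d y x)
    (htri : ∀ x y z, d x z ≤ d x y + d y z) {x y z : V} {c : ℝ≥0∞}
    (h : d x z ≤ c * d x y) : d y z ≤ (c + 1) * d x y :=
  calc d y z ≤ d y x + d x z := htri y x z
    _ ≤ d x y + c * d x y := by rw [hsym y x]; gcongr
    _ = (c + 1) * d x y := by ring

theorem add_dist_le_two_mul_add_one_mul_of_dist_le (hsym : ∀ x y, d x y = d y x)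
    (htri : ∀ x y z, d x z ≤ d x y + d y z) {x y z : V} {c : ℝ≥0∞}
    (h : d x z ≤ c * d x y) : d x z + d y z ≤ (2 * c + 1) * d x y :=
  calc d x z + d y z ≤ c * d x y + (c + 1) * d x y :=
        add_le_add h (dist_le_add_one_mul_of_dist_le hsym htri h)
    _ = (2 * c + 1) * d x y := by ring

theorem distToSet_le_of_mem {A : Set V} {x y : V} (hy : y ∈ A) : distToSet d x A ≤ d x y :=
  iInf₂_le y hy

theorem distToSet_anti {S T : Set V} (x : V) (hST : S ⊆ T) :
    distToSet d x T ≤ distToSet d x S :=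
  iInf_le_iInf_of_subset hST

theorem distToSet_empty (x : V) : distToSet d x ∅ = ⊤ := by
  simp [distToSet]

end Pseudometric

theorem two_mul_add_one_le_two_mul_sub_one {j k : ℕ} (h : j < k) :
    (2 * j + 1 : ℝ≥0∞) ≤ 2 * k - 1 := by
  apply ENNReal.le_sub_of_add_le_right ENNReal.one_ne_top
  exact_mod_cast (by omega : 2 * j + 1 + 1 ≤ 2 * k)

section Hierarchy

variable {V : Type*} {d : V → V → ℝ≥0∞} {k : ℕ} {A : ℕ → Set V}

def hubSet (d : V → V → ℝ≥0∞) (k : ℕ) (A : ℕ → Set V) (p : ℕ → V → V) (x : V) : Set V :=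
  Bunch d k A x ∪ (fun i => p i x) '' {i | i < k}

theorem exists_mem_sdiff_succ (hA : Antitone A) (hAk : A k = ∅) {j : ℕ} {z : V}
    (hz : z ∈ A j) : ∃ ℓ, j ≤ ℓ ∧ ℓ < k ∧ z ∈ A ℓ \ A (ℓ + 1) := by
  classical
  have hex : ∃ n, z ∉ A n := ⟨k, by simp [hAk]⟩
  have hmem : ∀ i ≤ j, z ∈ A i := fun i hi => hA hi hz
  have hjn : j < Nat.find hex := by
    by_contra! hle
    exact Nat.find_spec hex (hmem _ hle)
  have hnk : Nat.find hex ≤ k := Nat.find_min' hex (by simp [hAk])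
  refine ⟨Nat.find hex - 1, by omega, by omega, not_not.mp (Nat.find_min hex (by omega)), ?_⟩
  rw [Nat.sub_add_cancel (by omega)]
  exact Nat.find_spec hex

theorem mem_bunch_of_lt_distToSet (hA : Antitone A) (hAk : A k = ∅) {j : ℕ} {y z : V}
    (hz : z ∈ A j) (hlt : d y z < distToSet d y (A (j + 1))) : z ∈ Bunch d k A y := by
  obtain ⟨ℓ, hjℓ, hℓk, hzℓ⟩ := exists_mem_sdiff_succ hA hAk hz
  simp only [Bunch, Set.mem_iUnion]
  exact ⟨ℓ, hℓk, hzℓ, hlt.trans_le (distToSet_anti y (hA (by omega)))⟩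

theorem lt_of_distToSet_ne_top (hA : Antitone A) (hAk : A k = ∅) {i : ℕ} {y : V}
    (h : distToSet d y (A i) ≠ ⊤) : i < k := by
  by_contra! hki
  have hempty : A i = ∅ := Set.subset_eq_empty (hA hki) hAk
  exact h (hempty ▸ distToSet_empty y)

variable {p : ℕ → V → V}

theorem dist_pivot_zero
    (hp : ∀ i < k, ∀ x : V, p i x ∈ A i ∧ d x (p i x) = distToSet d x (A i))
    (hrefl : ∀ x, d x x = 0) (hk : 0 < k) (h0 : A 0 = Set.univ) (x : V) :
    d x (p 0 x) = 0 := by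
  rw [(hp 0 hk x).2]
  exact le_antisymm ((distToSet_le_of_mem (h0 ▸ Set.mem_univ x)).trans (hrefl x).le) bot_le

theorem exists_mem_hubSet_inter_or_dist_pivot_succ_le
    (hp : ∀ i < k, ∀ x : V, p i x ∈ A i ∧ d x (p i x) = distToSet d x (A i))
    (hsym : ∀ x y, d x y = d y x) (htri : ∀ x y z, d x z ≤ d x y + d y z)
    (hA : Antitone A) (hAk : A k = ∅) {j : ℕ} {x y : V} (hj : j < k) (hΔ : d x y ≠ ⊤)
    (hpiv : d x (p j x) ≤ j * d x y) :
    (∃ z ∈ hubSet d k A p x ∩ hubSet d k A p y, d x z + d y z ≤ (2 * k - 1) * d x y) ∨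
      (j + 1 < k ∧ d y (p (j + 1) y) ≤ (j + 1 : ℕ) * d y x) := by
  by_cases hstop : d y (p j x) < distToSet d y (A (j + 1))
  · refine .inl ⟨p j x, ⟨.inr ⟨j, hj, rfl⟩, .inl ?_⟩, ?_⟩
    · exact mem_bunch_of_lt_distToSet hA hAk (hp j hj x).1 hstop
    · calc d x (p j x) + d y (p j x) ≤ (2 * j + 1) * d x y :=
            add_dist_le_two_mul_add_one_mul_of_dist_le hsym htri hpiv
        _ ≤ (2 * k - 1) * d x y := by gcongr; exact two_mul_add_one_le_two_mul_sub_one hj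
  have hnext : distToSet d y (A (j + 1)) ≤ (j + 1 : ℕ) * d y x := by
    rw [hsym y x]; push_cast
    exact (not_lt.mp hstop).trans (dist_le_add_one_mul_of_dist_le hsym htri hpiv)
  have hj1 : j + 1 < k := lt_of_distToSet_ne_top hA hAk
    (ne_top_of_le_ne_top (ENNReal.mul_ne_top (ENNReal.natCast_ne_top _) (hsym y x ▸ hΔ)) hnext)
  exact .inr ⟨hj1, (hp (j + 1) hj1 y).2 ▸ hnext⟩

theorem exists_mem_hubSet_inter_of_dist_pivot_le
    (hp : ∀ i < k, ∀ x : V, p i x ∈ A i ∧ d x (p i x) = distToSet d x (A i))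
    (hsym : ∀ x y, d x y = d y x) (htri : ∀ x y z, d x z ≤ d x y + d y z)
    (hA : Antitone A) (hAk : A k = ∅) (n : ℕ) :
    ∀ j x y, j + n + 1 = k → d x y ≠ ⊤ → d x (p j x) ≤ j * d x y →
      ∃ z ∈ hubSet d k A p x ∩ hubSet d k A p y, d x z + d y z ≤ (2 * k - 1) * d x y := by
  induction n with
  | zero =>
    intro j x y hjk hΔ hpiv
    rcases exists_mem_hubSet_inter_or_dist_pivot_succ_le hp hsym htri hA hAk (by omega) hΔ hpiv
      with hhub | ⟨hj1, -⟩
    · exact hhub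
    · omega
  | succ n ih =>
    intro j x y hjk hΔ hpiv
    rcases exists_mem_hubSet_inter_or_dist_pivot_succ_le hp hsym htri hA hAk (by omega) hΔ hpiv
      with hhub | ⟨-, hpiv'⟩
    · exact hhub
    obtain ⟨z, hz, hzle⟩ := ih (j + 1) y x (by omega) (hsym x y ▸ hΔ) hpiv'
    exact ⟨z, Set.inter_comm _ _ ▸ hz, by rwa [add_comm, hsym x y]⟩

end Hierarchy

/-- the Thorup–Zwick stretch lemma.  For any `u, w` there is an index `i ≤ k-1`
and a vertex `z ∈ (B(u) ∩ B(w)) ∪ {p_i(u), p_i(w)}` with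
`d(u,z) + d(w,z) ≤ (2k-1)·d(u,w)`; in particular, hub sets `S(v) = B(v) ∪ {p_0(v),…,p_{k-1}(v)}`
with exact distances give a hub-labeling scheme of stretch `2k-1`. -/
theorem tz_stretch_lemma {V : Type*}
    (d : V → V → ℝ≥0∞) (hrefl : ∀ x, d x x = 0)
    (hsym : ∀ x y, d x y = d y x)
    (htri : ∀ x y z, d x z ≤ d x y + d y z)
    (k : ℕ) (hk : 1 ≤ k) (A : ℕ → Set V) (hdec : ∀ i, A (i + 1) ⊆ A i)
    (h0 : A 0 = Set.univ) (hA : A k = ∅)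
    (p : ℕ → V → V)
    (hp : ∀ i < k, ∀ x : V, p i x ∈ A i ∧ d x (p i x) = distToSet d x (A i)) :
    (∀ u w : V, ∃ i < k, ∃ z ∈ (Bunch d k A u ∩ Bunch d k A w) ∪ {p i u, p i w},
        d u z + d w z ≤ (2 * k - 1 : ℝ≥0∞) * d u w) ∧
      (∀ u w : V,
        (⨅ z ∈ (Bunch d k A u ∪ (fun i => p i u) '' {i | i < k}) ∩
            (Bunch d k A w ∪ (fun i => p i w) '' {i | i < k}),
          (d u z + d w z)) ≤ (2 * k - 1 : ℝ≥0∞) * d u w) := by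
  have hanti : Antitone A := antitone_nat_of_succ_le hdec
  have hpiv0 : ∀ x y, d x (p 0 x) ≤ ((0 : ℕ) : ℝ≥0∞) * d x y := fun x _ => by
    rw [dist_pivot_zero hp hrefl hk h0 x]; exact bot_le
  have hone : (1 : ℝ≥0∞) ≤ 2 * k - 1 := by
    simpa using two_mul_add_one_le_two_mul_sub_one hk
  refine ⟨fun u w => ⟨0, hk, p 0 u, Or.inr (Set.mem_insert _ _), ?_⟩, fun u w => ?_⟩
  · calc d u (p 0 u) + d w (p 0 u) ≤ (2 * ((0 : ℕ) : ℝ≥0∞) + 1) * d u w :=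
          add_dist_le_two_mul_add_one_mul_of_dist_le hsym htri (hpiv0 u w)
      _ ≤ (2 * k - 1) * d u w := by gcongr; exact two_mul_add_one_le_two_mul_sub_one hk
  by_cases hΔ : d u w = ⊤
  · rw [hΔ, ENNReal.mul_top (zero_lt_one.trans_le hone).ne']
    exact le_top
  obtain ⟨z, hz, hzle⟩ :=
    exists_mem_hubSet_inter_of_dist_pivot_le hp hsym htri hanti hA (k - 1) 0 u w (by omega) hΔ
      (hpiv0 u w)
  exact (iInf₂_le z hz).trans hzle
end

section
/- Stretch composition for the reduction: if A is a hub-labeling scheme of stretch α ≥ 1 for the decremental subgraph G_A = (V, F \ D) of G, B has stretch β ≥ 1 on the auxiliary graph H containing the inserted edges together with the hub edges, and H's edge weights satisfy w_H(x,y) ≤ min over applicable of (w_G(x,y), δ(x,y), δ(y,x)), then the combined query answer δ_C(s,t) = min(min_{p∈S(s)∩V(H), q∈S(t)∩V(H)} (δ(s,p)+δ_B(p,q)+δ(t,q)), δ_A(s,t)) satisfies dist_G(s,t) ≤ δ_C(s,t) ≤ α·β·dist_G(s,t). -/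
open scoped ENNReal BigOperators

variable {V : Type*}

/-- The length of a walk (given as a list of vertices) with respect to edge weights `w`.
Absent edges are modeled by weight `∞`. -/
noncomputable def walkLength (w : V → V → ℝ≥0∞) : List V → ℝ≥0∞
  | [] => 0
  | [_] => 0
  | a :: b :: rest => w a b + walkLength w (b :: rest)

/-- `p` is a walk from `s` to `t`. -/
def IsWalk (s t : V) (p : List V) : Prop :=
  p.head? = some s ∧ p.getLast? = some t

/-- Shortest-path distance induced by edge weights `w`. -/
noncomputable def gdist (w : V → V → ℝ≥0∞) (s t : V) : ℝ≥0∞ :=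
  ⨅ p : {l : List V // IsWalk s t l}, walkLength w p.1

/-!
Follow a walk from `s` to `t` in `G`. If it uses no inserted edge, it is a walk of `G_A` and
scheme `A` alone answers within `α`. Otherwise let `a` and `b` be the first and last vertices of
the walk incident to an inserted edge; both are attached in `H` to all of their hubs. The prefix up
to `a` and the suffix from `b` are walks of `G_A`, so hubs `p ∈ S s ∩ S a` and `q ∈ S t ∩ S b`
pay at most `α` times their lengths, and `p, q ∈ V(H)`. Between `a` and `b` the walk alternates
inserted edges (present in `H` with no larger weight) and `G_A`-segments joining hub-attached
vertices (bridged in `H` through a common hub at stretch `α`), so `dist_H(a, b)` is at most `α`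
times the middle length. Running `B` from `p` to `q` costs one further factor `β`.
-/

section Walks

variable {w w₁ w₂ : V → V → ℝ≥0∞} {a b c s t x : V} {l : List V}

theorem walkLength_singleton (w : V → V → ℝ≥0∞) (a : V) : walkLength w [a] = 0 := rfl

theorem walkLength_cons_cons (w : V → V → ℝ≥0∞) (a b : V) (l : List V) :
    walkLength w (a :: b :: l) = w a b + walkLength w (b :: l) := rfl

theorem walkLength_mono (h : ∀ x y, w₁ x y ≤ w₂ x y) :
    ∀ l : List V, walkLength w₁ l ≤ walkLength w₂ l
  | [] => le_rfl
  | [_] => le_rfl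
  | a :: b :: l => add_le_add (h a b) (walkLength_mono h (b :: l))

theorem walkLength_append_pair (w : V → V → ℝ≥0∞) (a b : V) :
    ∀ l : List V, walkLength w (l ++ [a, b]) = walkLength w (l ++ [a]) + w a b
  | [] => by simp [walkLength]
  | [x] => by simp [walkLength]
  | x :: y :: l => by
    simp only [List.cons_append, walkLength_cons_cons]
    rw [← List.cons_append, walkLength_append_pair w a b (y :: l), List.cons_append, add_assoc]

theorem walkLength_reverse (hsym : ∀ x y, w x y = w y x) :
    ∀ l : List V, walkLength w l.reverse = walkLength w l
  | [] => rfl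
  | [_] => rfl
  | a :: b :: l => by
    rw [List.reverse_cons, List.reverse_cons, List.append_assoc, List.singleton_append,
      walkLength_append_pair, ← List.reverse_cons, walkLength_reverse hsym (b :: l),
      walkLength_cons_cons, hsym, add_comm]

theorem not_isWalk_nil : ¬IsWalk s t ([] : List V) := by
  simp [IsWalk]

theorem IsWalk.exists_eq_cons (h : IsWalk s t l) : ∃ r, l = s :: r :=
  List.head?_eq_some_iff.1 h.1

theorem IsWalk.cons {u : V} {r : List V} (h : IsWalk u t (u :: r)) (a : V) :
    IsWalk a t (a :: u :: r) :=
  ⟨rfl, by rw [List.getLast?_cons_cons]; exact h.2⟩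

theorem IsWalk.reverse (h : IsWalk s t l) : IsWalk t s l.reverse :=
  ⟨by rw [List.head?_reverse]; exact h.2, by rw [List.getLast?_reverse]; exact h.1⟩

theorem IsWalk.induction {P : V → List V → Prop} (single : P t [t])
    (cons : ∀ a u r, IsWalk u t (u :: r) → P u (u :: r) → P a (a :: u :: r))
    (h : IsWalk x t l) : P x l := by
  induction l generalizing x with
  | nil => exact absurd h not_isWalk_nil
  | cons a r ih =>
    obtain rfl : a = x := by simpa using h.1
    cases r with
    | nil =>
      obtain rfl : a = t := by simpa using h.2
      exact single
    | cons u r =>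
      have hr : IsWalk u t (u :: r) := ⟨rfl, by simpa [List.getLast?_cons_cons] using h.2⟩
      exact cons a u r hr (ih hr)

theorem gdist_le_walkLength (h : IsWalk s t l) : gdist w s t ≤ walkLength w l :=
  iInf_le (fun p : {l : List V // IsWalk s t l} => walkLength w p.1) ⟨l, h⟩

theorem gdist_self (w : V → V → ℝ≥0∞) (a : V) : gdist w a a = 0 :=
  nonpos_iff_eq_zero.1 (gdist_le_walkLength (l := [a]) ⟨rfl, rfl⟩)

theorem gdist_le_weight (w : V → V → ℝ≥0∞) (a b : V) : gdist w a b ≤ w a b :=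
  (gdist_le_walkLength (l := [a, b]) ⟨rfl, rfl⟩).trans_eq (add_zero _)

theorem gdist_mono (h : ∀ x y, w₁ x y ≤ w₂ x y) (a b : V) : gdist w₁ a b ≤ gdist w₂ a b :=
  le_iInf fun l => (gdist_le_walkLength l.2).trans (walkLength_mono h l.1)

theorem gdist_le_weight_add (b : V) : gdist w a c ≤ w a b + gdist w b c := by
  rw [gdist.eq_1 w b c, ENNReal.add_iInf]
  refine le_iInf fun ⟨l, hl⟩ => ?_
  obtain ⟨r, rfl⟩ := hl.exists_eq_cons
  cases r with
  | nil => exact gdist_le_walkLength (l := [a, b]) ⟨rfl, hl.2⟩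
  | cons u r => exact gdist_le_walkLength (hl.cons a)

theorem IsWalk.gdist_le_walkLength_add (h : IsWalk a b l) :
    gdist w a c ≤ walkLength w l + gdist w b c := by
  refine h.induction (P := fun x l => gdist w x c ≤ walkLength w l + gdist w b c)
    (by rw [walkLength_singleton, zero_add]) fun a u r _ ih => ?_
  calc gdist w a c ≤ w a u + gdist w u c := gdist_le_weight_add u
    _ ≤ w a u + (walkLength w (u :: r) + gdist w b c) := by gcongr
    _ = walkLength w (a :: u :: r) + gdist w b c := by rw [walkLength_cons_cons, add_assoc]

theorem gdist_triangle (b : V) : gdist w a c ≤ gdist w a b + gdist w b c := by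
  rw [gdist.eq_1 w a b, ENNReal.iInf_add]
  exact le_iInf fun l => l.2.gdist_le_walkLength_add

theorem gdist_le_gdist_add_weight (b : V) : gdist w a c ≤ gdist w a b + w b c :=
  (gdist_triangle b).trans (by gcongr; exact gdist_le_weight w b c)

theorem gdist_le_gdist_of_forall_gdist_le (h : ∀ x y, gdist w₁ x y ≤ w₂ x y) :
    gdist w₁ a b ≤ gdist w₂ a b := by
  refine le_iInf fun l => l.2.induction (P := fun x l => gdist w₁ x b ≤ walkLength w₂ l)
    (by rw [gdist_self]; exact zero_le) fun a u r _ ih => ?_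
  calc gdist w₁ a b ≤ gdist w₁ a u + gdist w₁ u b := gdist_triangle u
    _ ≤ w₂ a u + walkLength w₂ (u :: r) := add_le_add (h a u) ih

theorem gdist_symm (hsym : ∀ x y, w x y = w y x) (a b : V) : gdist w a b = gdist w b a := by
  have key : ∀ x y : V, gdist w x y ≤ gdist w y x := fun x y =>
    le_iInf fun l => (gdist_le_walkLength l.2.reverse).trans_eq (walkLength_reverse hsym l.1)
  exact le_antisymm (key a b) (key b a)

/-- On a finite vertex set every edge weighs at least the (positive) minimum weight. -/
theorem gdist_pos [Fintype V] (hpos : ∀ x y, 0 < w x y) (h : s ≠ t) : 0 < gdist w s t := by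
  obtain ⟨e, -, he⟩ := Finset.exists_min_image Finset.univ (fun e : V × V => w e.1 e.2)
    ⟨(s, t), Finset.mem_univ _⟩
  refine (hpos e.1 e.2).trans_le (le_iInf fun ⟨l, hl⟩ => ?_)
  obtain ⟨r, rfl⟩ := hl.exists_eq_cons
  cases r with
  | nil => exact absurd (by simpa using hl.2) h
  | cons u r => exact (he (s, u) (Finset.mem_univ _)).trans le_self_add

theorem le_mul_gdist_of_forall_isWalk {c d : ℝ≥0∞} (hc : c ≠ ⊤)
    (h : ∀ l, IsWalk s t l → d ≤ c * walkLength w l) : d ≤ c * gdist w s t := by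
  rw [gdist, ENNReal.mul_iInf' (fun hc' => absurd hc' hc) fun _ => ⟨⟨[s, t], rfl, rfl⟩⟩]
  exact le_iInf fun l => h l.1 l.2

end Walks

theorem le_mul_biInf_add_biInf {ι κ : Type*} {I : Set ι} {K : Set κ} {f : ι → ℝ≥0∞}
    {g : κ → ℝ≥0∞} {β c d : ℝ≥0∞} (hβ0 : β ≠ 0) (hβ : β ≠ ⊤)
    (h : ∀ i ∈ I, ∀ k ∈ K, d ≤ β * (f i + c + g k)) :
    d ≤ β * ((⨅ i ∈ I, f i) + c + ⨅ k ∈ K, g k) := by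
  simp only [ENNReal.iInf_add, ENNReal.add_iInf, ENNReal.mul_iInf_of_ne hβ0 hβ]
  exact le_iInf₂ fun k hk => le_iInf₂ fun i hi => h i hi k hk

section Reduction

variable {wA wI wG wH : V → V → ℝ≥0∞} {T : Set V} {S : V → Set V} {δ δB : V → V → ℝ≥0∞}
  {VH : Set V} {α β : ℝ≥0∞} {s t : V} {l : List V}

/-- The paper's `δ_A`. -/
noncomputable def hubEstimate (S : V → Set V) (δ : V → V → ℝ≥0∞) (x y : V) : ℝ≥0∞ :=
  ⨅ z ∈ S x ∩ S y, (δ x z + δ y z)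

noncomputable def auxEstimate (S : V → Set V) (δ : V → V → ℝ≥0∞) (VH : Set V)
    (δB : V → V → ℝ≥0∞) (s t : V) : ℝ≥0∞ :=
  ⨅ p ∈ S s ∩ VH, ⨅ q ∈ S t ∩ VH, (δ s p + δB p q + δ t q)

/-- The paper's `δ_C`. -/
noncomputable def combinedEstimate (S : V → Set V) (δ : V → V → ℝ≥0∞) (VH : Set V)
    (δB : V → V → ℝ≥0∞) (s t : V) : ℝ≥0∞ :=
  min (auxEstimate S δ VH δB s t) (hubEstimate S δ s t)

def HasHubEdges (S : V → Set V) (δ : V → V → ℝ≥0∞) (VH : Set V) (wH : V → V → ℝ≥0∞)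
    (v : V) : Prop :=
  ∀ z ∈ S v, wH v z ≤ δ v z ∧ z ∈ VH

theorem gdist_le_hubEstimate (hsymH : ∀ x y, wH x y = wH y x) {u v : V}
    (hu : HasHubEdges S δ VH wH u) (hv : HasHubEdges S δ VH wH v) :
    gdist wH u v ≤ hubEstimate S δ u v :=
  le_iInf₂ fun z hz => calc
    gdist wH u v ≤ gdist wH u z + wH z v := gdist_le_gdist_add_weight z
    _ ≤ wH u z + wH v z := by rw [hsymH z v]; gcongr; exact gdist_le_weight wH u z
    _ ≤ δ u z + δ v z := add_le_add (hu z hz.1).1 (hv z hz.2).1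

theorem IsWalk.first_inserted (hG : ∀ x y, wG x y = min (wA x y) (wI x y))
    (hT : ∀ x y, wI x y < wA x y → x ∈ T) {x : V} (hl : IsWalk x t l) :
    gdist wA x t ≤ walkLength wG l ∨
      ∃ a ∈ T, ∃ l', IsWalk a t l' ∧ gdist wA x a + walkLength wG l' ≤ walkLength wG l := by
  have key := hl.induction (P := fun y l => ∀ v, gdist wA v t ≤ gdist wA v y + walkLength wG l ∨
      ∃ a ∈ T, ∃ l', IsWalk a t l' ∧
        gdist wA v a + walkLength wG l' ≤ gdist wA v y + walkLength wG l)
    (fun v => .inl (by rw [walkLength_singleton, add_zero])) fun a u r hr ih v => by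
      by_cases hAI : wA a u ≤ wI a u
      · have step : gdist wA v u + walkLength wG (u :: r)
            ≤ gdist wA v a + walkLength wG (a :: u :: r) := by
          rw [walkLength_cons_cons, hG, min_eq_left hAI, ← add_assoc]
          gcongr
          exact gdist_le_gdist_add_weight a
        exact (ih v).imp (·.trans step) fun ⟨b, hb, l', hl', hlen⟩ =>
          ⟨b, hb, l', hl', hlen.trans step⟩
      · exact .inr ⟨a, hT a u (not_le.1 hAI), _, hr.cons a, le_rfl⟩
  simpa only [gdist_self, zero_add] using key x

theorem IsWalk.inserted_segment (hG : ∀ x y, wG x y = min (wA x y) (wI x y))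
    (hsymA : ∀ x y, wA x y = wA y x) (hsymG : ∀ x y, wG x y = wG y x)
    (hT : ∀ x y, wI x y < wA x y → x ∈ T) (hl : IsWalk s t l) :
    gdist wA s t ≤ walkLength wG l ∨ ∃ a ∈ T, ∃ b ∈ T, ∃ m, IsWalk a b m ∧
      gdist wA s a + walkLength wG m + gdist wA b t ≤ walkLength wG l := by
  rcases hl.first_inserted hG hT with h | ⟨a, ha, l', hl', hlen⟩
  · exact .inl h
  refine .inr ?_
  rcases hl'.reverse.first_inserted hG hT with h' | ⟨b, hb, m, hm, hlen'⟩
  · rw [walkLength_reverse hsymG] at h'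
    refine ⟨a, ha, a, ha, [a], ⟨rfl, rfl⟩, ?_⟩
    calc gdist wA s a + walkLength wG [a] + gdist wA a t
        = gdist wA s a + gdist wA t a := by
          rw [walkLength_singleton, add_zero, gdist_symm hsymA a t]
      _ ≤ gdist wA s a + walkLength wG l' := by gcongr
      _ ≤ walkLength wG l := hlen
  · rw [walkLength_reverse hsymG] at hlen'
    refine ⟨a, ha, b, hb, m.reverse, hm.reverse, ?_⟩
    calc gdist wA s a + walkLength wG m.reverse + gdist wA b t
        = gdist wA s a + (gdist wA t b + walkLength wG m) := by
          rw [walkLength_reverse hsymG, gdist_symm hsymA b t, add_assoc, add_comm (walkLength _ _)]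
      _ ≤ gdist wA s a + walkLength wG l' := by gcongr
      _ ≤ walkLength wG l := hlen

/-- Between vertices of `T`, every inserted edge is an edge of `H` and every segment of `G_A`
is bridged in `H` at stretch `α`. -/
theorem IsWalk.gdist_le_mul (hG : ∀ x y, wG x y = min (wA x y) (wI x y)) (hα : 1 ≤ α)
    (hTH : ∀ u ∈ T, ∀ v ∈ T, gdist wH u v ≤ α * gdist wA u v)
    (hI : ∀ x y, wI x y < wA x y → x ∈ T ∧ y ∈ T ∧ wH x y ≤ wI x y)
    {x b v : V} (hb : b ∈ T) (hv : v ∈ T) (hl : IsWalk x b l) :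
    gdist wH v b ≤ α * (gdist wA v x + walkLength wG l) := by
  refine hl.induction (P := fun x l => ∀ {v}, v ∈ T →
      gdist wH v b ≤ α * (gdist wA v x + walkLength wG l))
    (fun hv => by rw [walkLength_singleton, add_zero]; exact hTH _ hv b hb)
    (fun a u r _ ih v hv => ?_) hv
  by_cases hAI : wA a u ≤ wI a u
  · refine (ih hv).trans ?_
    rw [walkLength_cons_cons, hG, min_eq_left hAI, ← add_assoc]
    gcongr
    exact gdist_le_gdist_add_weight a
  · obtain ⟨ha, hu, hwH⟩ := hI a u (not_le.1 hAI)
    have hub := ih hu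
    rw [gdist_self, zero_add] at hub
    calc gdist wH v b ≤ gdist wH v a + (gdist wH a u + gdist wH u b) :=
          (gdist_triangle a).trans (by gcongr; exact gdist_triangle u)
      _ ≤ α * gdist wA v a + (α * wI a u + α * walkLength wG (u :: r)) := by
        gcongr
        · exact hTH v hv a ha
        · exact (gdist_le_weight wH a u).trans (hwH.trans (le_mul_of_one_le_left zero_le hα))
      _ = α * (gdist wA v a + walkLength wG (a :: u :: r)) := by
        rw [walkLength_cons_cons, hG, min_eq_right (le_of_not_ge hAI)]; ring

theorem auxEstimate_le (hβ : 1 ≤ β) (hβtop : β ≠ ⊤) (hsymH : ∀ x y, wH x y = wH y x)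
    (hB : ∀ p q, δB p q ≤ β * gdist wH p q) {a b : V}
    (ha : HasHubEdges S δ VH wH a) (hb : HasHubEdges S δ VH wH b) :
    auxEstimate S δ VH δB s t
      ≤ β * (hubEstimate S δ s a + gdist wH a b + hubEstimate S δ t b) := by
  refine le_mul_biInf_add_biInf (zero_lt_one.trans_le hβ).ne' hβtop fun p hp q hq => ?_
  have hpq : gdist wH p q ≤ δ a p + gdist wH a b + δ b q := calc
    gdist wH p q ≤ wH p a + gdist wH a b + wH b q :=
      (gdist_le_gdist_add_weight b).trans (by gcongr; exact gdist_le_weight_add a)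
    _ ≤ δ a p + gdist wH a b + δ b q := by
      rw [hsymH]; gcongr; exacts [(ha p hp.2).1, (hb q hq.2).1]
  calc auxEstimate S δ VH δB s t ≤ δ s p + δB p q + δ t q :=
        (iInf₂_le p ⟨hp.1, (ha p hp.2).2⟩).trans (iInf₂_le q ⟨hq.1, (hb q hq.2).2⟩)
    _ ≤ β * δ s p + β * (δ a p + gdist wH a b + δ b q) + β * δ t q := by
      gcongr
      · exact le_mul_of_one_le_left zero_le hβ
      · exact (hB p q).trans (by gcongr)
      · exact le_mul_of_one_le_left zero_le hβ
    _ = β * (δ s p + δ a p + gdist wH a b + (δ t q + δ b q)) := by ring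

theorem gdist_le_combinedEstimate (hsymG : ∀ x y, wG x y = wG y x)
    (hGA : ∀ x y, wG x y ≤ wA x y) (hδ : ∀ v u, u ∈ S v → gdist wA v u ≤ δ v u)
    (hHlb : ∀ x y, gdist wG x y ≤ wH x y) (hB : ∀ p q, gdist wH p q ≤ δB p q) :
    gdist wG s t ≤ combinedEstimate S δ VH δB s t := by
  have hub : ∀ x z, z ∈ S x → gdist wG x z ≤ δ x z := fun x z hz =>
    (gdist_mono hGA x z).trans (hδ x z hz)
  refine le_min (le_iInf₂ fun p hp => le_iInf₂ fun q hq => ?_) (le_iInf₂ fun z hz => ?_)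
  · calc gdist wG s t ≤ gdist wG s p + gdist wG p q + gdist wG q t :=
          (gdist_triangle q).trans (by gcongr; exact gdist_triangle p)
      _ ≤ δ s p + δB p q + δ t q := by
        gcongr
        · exact hub s p hp.1
        · exact (gdist_le_gdist_of_forall_gdist_le hHlb).trans (hB p q)
        · exact (gdist_symm hsymG q t).trans_le (hub t q hq.1)
  · calc gdist wG s t ≤ gdist wG s z + gdist wG z t := gdist_triangle z
      _ ≤ δ s z + δ t z :=
        add_le_add (hub s z hz.1) ((gdist_symm hsymG z t).trans_le (hub t z hz.2))

theorem IsWalk.combinedEstimate_le (hG : ∀ x y, wG x y = min (wA x y) (wI x y))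
    (hsymA : ∀ x y, wA x y = wA y x) (hsymG : ∀ x y, wG x y = wG y x)
    (hsymH : ∀ x y, wH x y = wH y x) (hα : 1 ≤ α) (hβ : 1 ≤ β) (hβtop : β ≠ ⊤)
    (hAstretch : ∀ x y, hubEstimate S δ x y ≤ α * gdist wA x y)
    (hI : ∀ x y, wI x y < wA x y →
      HasHubEdges S δ VH wH x ∧ HasHubEdges S δ VH wH y ∧ wH x y ≤ wI x y)
    (hB : ∀ p q, δB p q ≤ β * gdist wH p q) (hl : IsWalk s t l) :
    combinedEstimate S δ VH δB s t ≤ α * β * walkLength wG l := by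
  have hTH : ∀ u ∈ {v | HasHubEdges S δ VH wH v}, ∀ v ∈ {v | HasHubEdges S δ VH wH v},
      gdist wH u v ≤ α * gdist wA u v := fun u hu v hv =>
    (gdist_le_hubEstimate hsymH hu hv).trans (hAstretch u v)
  rcases hl.inserted_segment hG hsymA hsymG (fun x y h => (hI x y h).1)
    with h | ⟨a, ha, b, hb, m, hm, hlen⟩
  · calc combinedEstimate S δ VH δB s t ≤ hubEstimate S δ s t := min_le_right _ _
      _ ≤ α * gdist wA s t := hAstretch s t
      _ ≤ α * β * walkLength wG l := by
        rw [mul_assoc]; gcongr; exact h.trans (le_mul_of_one_le_left zero_le hβ)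
  have hab := hm.gdist_le_mul hG hα hTH hI hb ha
  rw [gdist_self, zero_add] at hab
  calc combinedEstimate S δ VH δB s t ≤ auxEstimate S δ VH δB s t := min_le_left _ _
    _ ≤ β * (hubEstimate S δ s a + gdist wH a b + hubEstimate S δ t b) :=
      auxEstimate_le hβ hβtop hsymH hB ha hb
    _ ≤ β * (α * gdist wA s a + α * walkLength wG m + α * gdist wA b t) := by
      gcongr
      · exact hAstretch s a
      · exact (hAstretch t b).trans_eq (by rw [gdist_symm hsymA])
    _ = α * β * (gdist wA s a + walkLength wG m + gdist wA b t) := by ring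
    _ ≤ α * β * walkLength wG l := by gcongr

end Reduction

/-- stretch composition for the reduction.  G has weights
wG = min(wA, wI) (decremental part F \ D and inserted part I); A is a hub-labeling scheme of
stretch α on G_A; the auxiliary graph H contains the inserted edges and hub edges with weights
dominated by the corresponding wG / δ values and dominating G-distances; δ_B has stretch β
on H.  Then the combined answer δ_C satisfies dist_G ≤ δ_C ≤ αβ · dist_G. -/
theorem reduction_stretch_composition {V : Type*} [Fintype V]
    (wA wI wG : V → V → ℝ≥0∞)
    (hG : ∀ x y, wG x y = min (wA x y) (wI x y))
    (hposG : ∀ x y, 0 < wG x y)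
    (hsymA : ∀ x y, wA x y = wA y x) (hsymI : ∀ x y, wI x y = wI y x)
    (α β : ℝ≥0∞) (hα : 1 ≤ α) (hβ : 1 ≤ β)
    (S : V → Set V) (δ : V → V → ℝ≥0∞)
    (hδ : ∀ v u, u ∈ S v → gdist wA v u ≤ δ v u)
    (hAstretch : ∀ x y, (⨅ z ∈ S x ∩ S y, (δ x z + δ y z)) ≤ α * gdist wA x y)
    (VH : Set V) (wH : V → V → ℝ≥0∞) (hsymH : ∀ x y, wH x y = wH y x)
    (hHlb : ∀ x y, gdist wG x y ≤ wH x y)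
    (hHedge : ∀ x y, wI x y < ⊤ → wH x y ≤ wG x y ∧ x ∈ VH ∧ y ∈ VH)
    (hHhub : ∀ x y, wI x y < ⊤ → ∀ z ∈ S x, wH x z ≤ δ x z ∧ z ∈ VH)
    (δB : V → V → ℝ≥0∞)
    (hB : ∀ p q, gdist wH p q ≤ δB p q ∧ δB p q ≤ β * gdist wH p q) :
    ∀ s t : V,
      gdist wG s t ≤
        min (⨅ p ∈ S s ∩ VH, ⨅ q ∈ S t ∩ VH, (δ s p + δB p q + δ t q))
          (⨅ z ∈ S s ∩ S t, (δ s z + δ t z)) ∧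
      min (⨅ p ∈ S s ∩ VH, ⨅ q ∈ S t ∩ VH, (δ s p + δB p q + δ t q))
          (⨅ z ∈ S s ∩ S t, (δ s z + δ t z)) ≤ α * β * gdist wG s t := by
  have hsymG : ∀ x y, wG x y = wG y x := fun x y => by rw [hG, hG, hsymA, hsymI]
  have hGA : ∀ x y, wG x y ≤ wA x y := fun x y => (hG x y).trans_le (min_le_left _ _)
  have hI : ∀ x y, wI x y < wA x y →
      HasHubEdges S δ VH wH x ∧ HasHubEdges S δ VH wH y ∧ wH x y ≤ wI x y := fun x y h =>
    have hfin : wI x y < ⊤ := h.trans_le le_top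
    ⟨hHhub x y hfin, hHhub y x (hsymI x y ▸ hfin),
      (hHedge x y hfin).1.trans ((hG x y).trans_le (min_le_right _ _))⟩
  intro s t
  refine ⟨gdist_le_combinedEstimate hsymG hGA hδ hHlb fun p q => (hB p q).1, ?_⟩
  by_cases hst : s = t
  · subst hst
    calc combinedEstimate S δ VH δB s s ≤ α * gdist wA s s :=
          (min_le_right _ _).trans (hAstretch s s)
      _ ≤ α * β * gdist wG s s := by rw [gdist_self, mul_zero]; exact zero_le
  have hα0 : α ≠ 0 := (zero_lt_one.trans_le hα).ne'
  by_cases hαβ : α * β = ⊤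
  · rw [hαβ, ENNReal.top_mul (gdist_pos hposG hst).ne']
    exact le_top
  have hβtop : β ≠ ⊤ := fun h => hαβ (by rw [h, ENNReal.mul_top hα0])
  exact le_mul_gdist_of_forall_isWalk hαβ fun l hl =>
    hl.combinedEstimate_le hG hsymA hsymG hsymH hα hβ hβtop hAstretch hI (fun p q => (hB p q).2)
end

section
/- Induction step for the update-time recurrence: let T_A(m) = P·m·n^{1/k} (hub-labeling total update time), and suppose oracle B_i has amortized update time t_i(n,m) = P^i·m^{3/(3i+1)}·n^{4i/k}. Setting ℓ = m^{(3i+1)/(3i+4)} and μ = P·n^{1/k}, the quantity T_A(m)/ℓ + t_i(n, ℓ·(1+2μ))·(2+4μ) is at most c·P^{i+1}·m^{3/(3(i+1)+1)}·n^{4(i+1)/k} for a suitable polylogarithmic factor P and constant c (treating P as an upper bound absorbing polylog factors, with n, m ≥ 2 and k ≥ 1). -/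
/-!
Write `μ = P·n^{1/k}` and `A = m^{3/(3i+4)}`. Since `m / ℓ = A` and `ℓ^{3/(3i+1)} = A`, the two
terms become `μ·A` and `P^i·A·(1+2μ)^{3/(3i+1)}·n^{4i/k}·(2+4μ)`. As `μ ≥ 1` and the exponent
`3/(3i+1)` is at most `3`, we have `(1+2μ)^{3/(3i+1)} ≤ 27μ³` and `2+4μ ≤ 6μ`, so both terms are
`O(P^i·n^{4i/k}·μ⁴·A) = O(P^{i+4}·n^{4(i+1)/k}·A)`, and `P^{i+4} ≤ (P⁴)^{i+1}`.
-/

lemma div_rpow_eq_rpow_one_sub {m : ℝ} (hm : 0 < m) (p : ℝ) : m / m ^ p = m ^ (1 - p) := by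
  rw [Real.rpow_sub hm, Real.rpow_one]

lemma rpow_div_rpow_div_cancel {m a : ℝ} (hm : 0 ≤ m) (ha : a ≠ 0) (b c : ℝ) :
    (m ^ (a / b)) ^ (c / a) = m ^ (c / b) := by
  rw [← Real.rpow_mul hm]
  congr 1
  field_simp

lemma one_add_two_mul_rpow_le {μ e : ℝ} (hμ : 1 ≤ μ) (he : e ≤ 3) :
    (1 + 2 * μ) ^ e ≤ 27 * μ ^ 3 :=
  calc (1 + 2 * μ) ^ e ≤ (1 + 2 * μ) ^ (3 : ℝ) := Real.rpow_le_rpow_of_exponent_le (by linarith) he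
    _ = (1 + 2 * μ) ^ 3 := by norm_cast
    _ ≤ (3 * μ) ^ 3 := by gcongr; linarith
    _ = 27 * μ ^ 3 := by ring

lemma add_mul_one_add_two_mul_rpow_le {μ e p N A : ℝ} (hμ : 1 ≤ μ) (he : e ≤ 3) (hp : 1 ≤ p)
    (hN : 1 ≤ N) (hA : 0 ≤ A) :
    μ * A + p * (A * (1 + 2 * μ) ^ e) * N * (2 + 4 * μ) ≤ 163 * (p * N * μ ^ 4 * A) := by
  have hpN : 1 ≤ p * N := one_le_mul_of_one_le_of_one_le hp hN
  have hμ4 : μ ≤ μ ^ 4 := le_self_pow₀ hμ (by norm_num)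
  have hfirst : μ * A ≤ p * N * μ ^ 4 * A := by
    gcongr
    nlinarith
  have hsecond : p * (A * (1 + 2 * μ) ^ e) * N * (2 + 4 * μ) ≤ 162 * (p * N * μ ^ 4 * A) :=
    calc p * (A * (1 + 2 * μ) ^ e) * N * (2 + 4 * μ)
        ≤ p * (A * (27 * μ ^ 3)) * N * (6 * μ) := by
          gcongr
          · exact one_add_two_mul_rpow_le hμ he
          · linarith
      _ = 162 * (p * N * μ ^ 4 * A) := by ring
  linarith

lemma rpow_mul_pow_four_le {P n k I : ℝ} (hP : 1 ≤ P) (hn : 0 < n) (hk : k ≠ 0) (hI : 0 ≤ I) :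
    P ^ I * n ^ (4 * I / k) * (P * n ^ (1 / k)) ^ 4 ≤
      (P ^ (4 : ℝ)) ^ (I + 1) * n ^ (4 * (I + 1) / k) := by
  have hP0 : 0 < P := by linarith
  have hn_pow : n ^ (4 * I / k) * (n ^ (1 / k)) ^ 4 = n ^ (4 * (I + 1) / k) := by
    rw [← Real.rpow_mul_natCast hn.le, ← Real.rpow_add hn]
    congr 1
    field_simp
    ring
  have hP_pow : P ^ I * P ^ 4 ≤ (P ^ (4 : ℝ)) ^ (I + 1) := by
    rw [← Real.rpow_mul hP0.le, ← Real.rpow_natCast, ← Real.rpow_add hP0]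
    exact Real.rpow_le_rpow_of_exponent_le hP (by push_cast; linarith)
  calc P ^ I * n ^ (4 * I / k) * (P * n ^ (1 / k)) ^ 4
      = (P ^ I * P ^ 4) * (n ^ (4 * I / k) * (n ^ (1 / k)) ^ 4) := by ring
    _ ≤ (P ^ (4 : ℝ)) ^ (I + 1) * n ^ (4 * (I + 1) / k) := by
      rw [hn_pow]
      gcongr

/-- induction step of the update-time recurrence of Theorem 3.  With
T_A(m) = P·m·n^{1/k}, t_i(n,m) = P^i·m^{3/(3i+1)}·n^{4i/k}, ℓ = m^{(3i+1)/(3i+4)} and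
μ = P·n^{1/k}, the quantity T_A(m)/ℓ + t_i(n, ℓ(1+2μ))·(2+4μ) is at most
c·P'^{i+1}·m^{3/(3(i+1)+1)}·n^{4(i+1)/k}, for the suitable polylogarithmic factor P' = P⁴
(absorbing polylog factors) and the constant c = 200. -/
theorem update_time_recurrence_step (n m k P : ℝ) (i : ℕ)
    (hn : 2 ≤ n) (hm : 2 ≤ m) (hk : 1 ≤ k) (hP : 1 ≤ P) :
    P * m * n ^ (1 / k) / m ^ ((3 * (i : ℝ) + 1) / (3 * (i : ℝ) + 4)) +
        P ^ (i : ℝ) *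
          (m ^ ((3 * (i : ℝ) + 1) / (3 * (i : ℝ) + 4)) * (1 + 2 * (P * n ^ (1 / k)))) ^
            (3 / (3 * (i : ℝ) + 1)) *
          n ^ (4 * (i : ℝ) / k) * (2 + 4 * (P * n ^ (1 / k))) ≤
      200 * (P ^ (4 : ℝ)) ^ ((i : ℝ) + 1) * m ^ (3 / (3 * ((i : ℝ) + 1) + 1)) *
        n ^ (4 * ((i : ℝ) + 1) / k) := by
  have hI : (0 : ℝ) ≤ i := Nat.cast_nonneg i
  set I : ℝ := (i : ℝ)
  set μ := P * n ^ (1 / k)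
  set A := m ^ (3 / (3 * I + 4))
  have hμ : 1 ≤ μ :=
    one_le_mul_of_one_le_of_one_le hP (Real.one_le_rpow (by linarith) (by positivity))
  have hterm₁ : P * m * n ^ (1 / k) / m ^ ((3 * I + 1) / (3 * I + 4)) = μ * A := by
    rw [mul_right_comm, mul_div_assoc, div_rpow_eq_rpow_one_sub (by linarith)]
    congr 2
    field_simp
    ring
  have hterm₂ : (m ^ ((3 * I + 1) / (3 * I + 4)) * (1 + 2 * μ)) ^ (3 / (3 * I + 1)) =
      A * (1 + 2 * μ) ^ (3 / (3 * I + 1)) := by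
    rw [Real.mul_rpow (by positivity) (by linarith),
      rpow_div_rpow_div_cancel (by linarith) (by positivity)]
  have hexp : 3 / (3 * I + 1) ≤ 3 := by
    rw [div_le_iff₀ (by positivity)]
    linarith
  rw [hterm₁, hterm₂, show 3 * (I + 1) + 1 = 3 * I + 4 by ring]
  calc _ ≤ 163 * (P ^ I * n ^ (4 * I / k) * μ ^ 4 * A) :=
        add_mul_one_add_two_mul_rpow_le hμ hexp (Real.one_le_rpow hP hI)
          (Real.one_le_rpow (by linarith) (by positivity)) (by positivity)
    _ ≤ 163 * ((P ^ (4 : ℝ)) ^ (I + 1) * n ^ (4 * (I + 1) / k) * A) := by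
      gcongr 163 * (?_ * A)
      exact rpow_mul_pow_four_le hP (by linarith) (by positivity) hI
    _ ≤ 200 * (P ^ (4 : ℝ)) ^ (I + 1) * A * n ^ (4 * (I + 1) / k) := by
      have : 0 ≤ (P ^ (4 : ℝ)) ^ (I + 1) * n ^ (4 * (I + 1) / k) * A := by positivity
      linarith
end
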